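/- For all points-to types pts and pts′: pts ≤ pts′ if and only if every state γ with γ ⊨ pts also satisfies γ ⊨ pts′. -/

import Mathlib

/-! Language of El-Zawawy, "Dead Code Elimination Based Pointer Analysis for
Multithreaded Programs". Variables are natural numbers; the address `x′` of a
variable `x` is represented by `Val.addr x`, so sets of addresses are
represented as sets of variables. -/

abbrev Var : Type := ℕ

/-- Values: integers or addresses (`Val.addr y` represents `y′`). -/
inductive Val : Type
  | int  : ℤ → Val
  | addr : Var → Val
  deriving DecidableEq

/-- Proper states `γ : Var → Val` (the error state `abort` is modelled by
`none` in `Option State`). -/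
abbrev State := Var → Val

inductive AOp : Type
  | add | sub | mul

def AOp.apply : AOp → ℤ → ℤ → ℤ
  | .add, m, n => m + n
  | .sub, m, n => m - n
  | .mul, m, n => m * n

/-- Arithmetic expressions `e ::= x | n | e₁ ⊕ e₂`. -/
inductive Aexp : Type
  | var : Var → Aexp
  | num : ℤ → Aexp
  | op  : AOp → Aexp → Aexp → Aexp

/-- Boolean expressions. -/
inductive Bexp : Type
  | tt | ff
  | not : Bexp → Bexp
  | eq  : Aexp → Aexp → Bexp
  | le  : Aexp → Aexp → Bexp
  | and : Bexp → Bexp → Bexp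
  | or  : Bexp → Bexp → Bexp

/-- Evaluation of arithmetic expressions; `none` is the error `!`.
Arithmetic operations on non-integer operands yield `!`. -/
def evalA : Aexp → State → Option Val
  | .var x, γ => some (γ x)
  | .num n, _ => some (.int n)
  | .op o e₁ e₂, γ =>
    match evalA e₁ γ, evalA e₂ γ with
    | some (.int n₁), some (.int n₂) => some (.int (o.apply n₁ n₂))
    | _, _ => none

/-- Evaluation of Boolean expressions; `none` is the error `!`. -/
def evalB : Bexp → State → Option Bool
  | .tt, _ => some true
  | .ff, _ => some false
  | .not b, γ => (evalB b γ).map Bool.not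
  | .eq e₁ e₂, γ =>
    match evalA e₁ γ, evalA e₂ γ with
    | some v₁, some v₂ => some (decide (v₁ = v₂))
    | _, _ => none
  | .le e₁ e₂, γ =>
    match evalA e₁ γ, evalA e₂ γ with
    | some (.int n₁), some (.int n₂) => some (decide (n₁ ≤ n₂))
    | _, _ => none
  | .and b₁ b₂, γ =>
    match evalB b₁ γ, evalB b₂ γ with
    | some v₁, some v₂ => some (v₁ && v₂)
    | _, _ => none
  | .or b₁ b₂, γ =>
    match evalB b₁ γ, evalB b₂ γ with
    | some v₁, some v₂ => some (v₁ || v₂)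
    | _, _ => none

/-- Free variables of an arithmetic expression. -/
def FV : Aexp → Set Var
  | .var x => {x}
  | .num _ => ∅
  | .op _ e₁ e₂ => FV e₁ ∪ FV e₂

/-- Free variables of a Boolean expression. -/
def FVB : Bexp → Set Var
  | .tt => ∅
  | .ff => ∅
  | .not b => FVB b
  | .eq e₁ e₂ => FV e₁ ∪ FV e₂
  | .le e₁ e₂ => FV e₁ ∪ FV e₂
  | .and b₁ b₂ => FVB b₁ ∪ FVB b₂
  | .or b₁ b₂ => FVB b₁ ∪ FVB b₂

/-- Statements. `assign x e` is `x := e`, `addrOf x y` is `x := &y`,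
`store x e` is `*x := e`, `load x y` is `x := *y`. -/
inductive Stmt : Type
  | assign : Var → Aexp → Stmt
  | addrOf : Var → Var → Stmt
  | store  : Var → Aexp → Stmt
  | load   : Var → Var → Stmt
  | skip   : Stmt
  | seq    : Stmt → Stmt → Stmt
  | ite    : Bexp → Stmt → Stmt → Stmt
  | while  : Bexp → Stmt → Stmt
  | par    : List Stmt → Stmt
  | parIf  : List (Bexp × Stmt) → Stmt
  | parFor : Stmt → Stmt

/-- The list of conditionals `if bᵢ then Sᵢ else skip` of a `par-if`. -/
def condThreads (bss : List (Bexp × Stmt)) : List Stmt :=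
  bss.map fun p => Stmt.ite p.1 p.2 .skip

mutual
/-- Big-step operational semantics `S : γ ⇝ state`; the result `none`
is the error state `abort`. -/
inductive Exec : Stmt → State → Option State → Prop
  | assign_abort {x e γ} : evalA e γ = none → Exec (.assign x e) γ none
  | assign_ok {x e γ v} : evalA e γ = some v →
      Exec (.assign x e) γ (some (Function.update γ x v))
  | addrOf {x y γ} : Exec (.addrOf x y) γ (some (Function.update γ x (.addr y)))
  | store_ptr {x e γ z st} : γ x = .addr z → Exec (.assign z e) γ st →
      Exec (.store x e) γ st
  | store_abort {x e γ} : (∀ z, γ x ≠ .addr z) → Exec (.store x e) γ none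
  | load_ptr {x y γ z γ'} : γ y = .addr z →
      Exec (.assign x (.var z)) γ (some γ') → Exec (.load x y) γ (some γ')
  | load_abort {x y γ} : (∀ z, γ y ≠ .addr z) → Exec (.load x y) γ none
  | skip {γ} : Exec .skip γ (some γ)
  | seq_abort {S₁ S₂ γ} : Exec S₁ γ none → Exec (.seq S₁ S₂) γ none
  | seq_ok {S₁ S₂ γ γ'' st} : Exec S₁ γ (some γ'') → Exec S₂ γ'' st →
      Exec (.seq S₁ S₂) γ st
  | ite_abort {b Sₜ Sf γ} : evalB b γ = none → Exec (.ite b Sₜ Sf) γ none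
  | ite_true {b Sₜ Sf γ st} : evalB b γ = some true → Exec Sₜ γ st →
      Exec (.ite b Sₜ Sf) γ st
  | ite_false {b Sₜ Sf γ st} : evalB b γ = some false → Exec Sf γ st →
      Exec (.ite b Sₜ Sf) γ st
  | while_abort {b S γ} : evalB b γ = none → Exec (.while b S) γ none
  | while_false {b S γ} : evalB b γ = some false → Exec (.while b S) γ (some γ)
  | while_true {b S γ γ'' st} : evalB b γ = some true → Exec S γ (some γ'') →
      Exec (.while b S) γ'' st → Exec (.while b S) γ st
  | while_true_abort {b S γ} : evalB b γ = some true → Exec S γ none →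
      Exec (.while b S) γ none
  /-- `par{{S₁},…,{Sₙ}} : γ ⇝ γ′` iff the threads can be executed sequentially
  in the order given by some permutation. -/
  | par_ok {Ss Ss' : List Stmt} {γ γ'} : Ss'.Perm Ss → ExecList Ss' γ (some γ') →
      Exec (.par Ss) γ (some γ')
  /-- `par` aborts iff executing some of its threads (a one-to-one selection,
  in some order) aborts. -/
  | par_abort {Ss Ss' : List Stmt} {γ} : List.Subperm Ss' Ss → ExecList Ss' γ none →
      Exec (.par Ss) γ none
  | parIf {bss γ st} : Exec (.par (condThreads bss)) γ st → Exec (.parIf bss) γ st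
  | parFor {S γ st} (n : ℕ) : Exec (.par (List.replicate n S)) γ st →
      Exec (.parFor S) γ st

/-- Sequential execution of a list of statements. -/
inductive ExecList : List Stmt → State → Option State → Prop
  | nil {γ} : ExecList [] γ (some γ)
  | cons_ok {S Ss γ γ'' st} : Exec S γ (some γ'') → ExecList Ss γ'' st →
      ExecList (S :: Ss) γ st
  | cons_abort {S Ss γ} : Exec S γ none → ExecList (S :: Ss) γ none
end

/-- Points-to types `pts : Var → P(Addrs)`; the address `y′` is represented by
`y`, so `PTS = Var → Set Var`.  The order `≤` and (pointwise) unions `⊔`, `⨆`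
are those of the pi complete lattice. -/
abbrev PTS := Var → Set Var

/-- `γ ⊨ pts` : whenever `γ x` is an address `y′`, `y′ ∈ pts x`. -/
def Models (γ : State) (pts : PTS) : Prop :=
  ∀ x y, γ x = Val.addr y → y ∈ pts x

/-- `γ ⊨_l pts` : restriction of `Models` to the variables in `l`. -/
def ModelsOn (l : Set Var) (γ : State) (pts : PTS) : Prop :=
  ∀ x ∈ l, ∀ y, γ x = Val.addr y → y ∈ pts x

/-- `γ ∼_l γ′` : the two states agree on all variables in `l`. -/
def Agree (l : Set Var) (γ γ' : State) : Prop :=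
  ∀ x ∈ l, γ x = γ' x

/-- `γ ∼_{(pts,l)} γ′`. -/
def AgreeTy (pts : PTS) (l : Set Var) (γ γ' : State) : Prop :=
  ModelsOn l γ pts ∧ ModelsOn l γ' pts ∧ Agree l γ γ'

/-- Ordering on live types `(pts, l)`: `pts ≤ pts′` and `l ⊇ l′`. -/
def LiveLe (t t' : PTS × Set Var) : Prop :=
  t.1 ≤ t'.1 ∧ t'.2 ⊆ t.2

/-- Expression judgements `e : pts → A`. -/
inductive ExprTy : Aexp → PTS → Set Var → Prop
  | num {n : ℤ} {pts : PTS} : ExprTy (.num n) pts ∅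
  | var {x : Var} {pts : PTS} : ExprTy (.var x) pts (pts x)
  | op {o e₁ e₂} {pts : PTS} : ExprTy (.op o e₁ e₂) pts ∅

/-- The pointer-analysis type system: judgements `S : pts → pts′`. -/
inductive PtrTy : Stmt → PTS → PTS → Prop
  | assign {x e pts A} : ExprTy e pts A →
      PtrTy (.assign x e) pts (Function.update pts x A)
  | addrOf {x y pts} : PtrTy (.addrOf x y) pts (Function.update pts x {y})
  | load {x y pts pts'} : (∀ z ∈ pts y, PtrTy (.assign x (.var z)) pts pts') →
      PtrTy (.load x y) pts pts'
  | store {x e pts pts'} : (∀ z ∈ pts x, PtrTy (.assign z e) pts pts') →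
      PtrTy (.store x e) pts pts'
  | skip {pts} : PtrTy .skip pts pts
  | seq {S₁ S₂ pts pts'' pts'} : PtrTy S₁ pts pts'' → PtrTy S₂ pts'' pts' →
      PtrTy (.seq S₁ S₂) pts pts'
  | ite {b Sₜ Sf pts pts'} : PtrTy Sₜ pts pts' → PtrTy Sf pts pts' →
      PtrTy (.ite b Sₜ Sf) pts pts'
  | while {b S pts} : PtrTy S pts pts → PtrTy (.while b S) pts pts
  | par {Ss : List Stmt} {pts : PTS} (ptss : Fin Ss.length → PTS)
      (h : ∀ i, PtrTy (Ss.get i) (pts ⊔ ⨆ j, ⨆ (_ : j ≠ i), ptss j) (ptss i)) :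
      PtrTy (.par Ss) pts (⨆ i, ptss i)
  | parIf {bss pts pts'} : PtrTy (.par (condThreads bss)) pts pts' →
      PtrTy (.parIf bss) pts pts'
  | parFor {S pts pts'} : PtrTy S (pts ⊔ pts') pts' → PtrTy (.parFor S) pts pts'
  | csq {S pts₁ pts₂ pts₁' pts₂'} : pts₁' ≤ pts₁ → PtrTy S pts₁ pts₂ →
      pts₂ ≤ pts₂' → PtrTy S pts₁' pts₂'

/-- The live-variables type system: judgements `S : (pts, l) → (pts′, l′)`. -/
inductive LiveTy : Stmt → PTS × Set Var → PTS × Set Var → Prop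
  | assign_dead {x e pts pts' l'} : PtrTy (.assign x e) pts pts' → x ∉ l' →
      LiveTy (.assign x e) (pts, l') (pts', l')
  | assign_live {x e pts pts' l'} : PtrTy (.assign x e) pts pts' → x ∈ l' →
      LiveTy (.assign x e) (pts, (l' \ {x}) ∪ FV e) (pts', l')
  | addrOf {x y pts l'} :
      LiveTy (.addrOf x y) (pts, l' \ {x}) (Function.update pts x {y}, l')
  | load_dead {x y pts pts' l'} : PtrTy (.load x y) pts pts' → x ∉ l' →
      LiveTy (.load x y) (pts, l' ∪ {y}) (pts', l')
  | load_live {x y pts pts' l'} : PtrTy (.load x y) pts pts' → x ∈ l' →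
      LiveTy (.load x y) (pts, (l' \ {x}) ∪ {y} ∪ pts y) (pts', l')
  | store_dead {x e pts pts' l'} : PtrTy (.store x e) pts pts' →
      pts x ∩ l' = ∅ → LiveTy (.store x e) (pts, l' ∪ {x}) (pts', l')
  | store_live {x e pts pts' l'} : PtrTy (.store x e) pts pts' →
      pts x ∩ l' ≠ ∅ → LiveTy (.store x e) (pts, l' ∪ FV e ∪ {x}) (pts', l')
  | skip {pts l} : LiveTy .skip (pts, l) (pts, l)
  | seq {S₁ S₂ pts l pts'' l'' pts' l'} : LiveTy S₁ (pts, l) (pts'', l'') →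
      LiveTy S₂ (pts'', l'') (pts', l') → LiveTy (.seq S₁ S₂) (pts, l) (pts', l')
  | ite {b Sₜ Sf pts l pts' l'} : LiveTy Sₜ (pts, l) (pts', l') →
      LiveTy Sf (pts, l) (pts', l') →
      LiveTy (.ite b Sₜ Sf) (pts, l ∪ FVB b) (pts', l')
  | while {b S pts l l'} : l = l' ∪ FVB b → LiveTy S (pts, l') (pts, l) →
      LiveTy (.while b S) (pts, l) (pts, l')
  | par {Ss : List Stmt} {pts : PTS} {l' : Set Var}
      (ptss : Fin Ss.length → PTS) (ls : Fin Ss.length → Set Var)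
      (h : ∀ i, LiveTy (Ss.get i)
        (pts ⊔ ⨆ j, ⨆ (_ : j ≠ i), ptss j, ls i)
        (ptss i, l' ∪ ⋃ j, ⋃ (_ : j ≠ i), ls j)) :
      LiveTy (.par Ss) (pts, ⋃ i, ls i) (⨆ i, ptss i, l')
  | parIf {bss pts l pts' l'} :
      LiveTy (.par (condThreads bss)) (pts, l) (pts', l') →
      LiveTy (.parIf bss) (pts, l) (pts', l')
  | parFor {S pts l pts' l'} : LiveTy S (pts ⊔ pts', l) (pts', l' ∪ l) →
      LiveTy (.parFor S) (pts, l) (pts', l')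
  | csq {S t₁ t₂ t₁' t₂'} : LiveLe t₁' t₁ → LiveTy S t₁ t₂ → LiveLe t₂ t₂' →
      LiveTy S t₁' t₂'

/-- The dead-code-elimination type system:
judgements `S : (pts, l) → (pts′, l′) ↪ S′`. -/
inductive DceTy : Stmt → PTS × Set Var → PTS × Set Var → Stmt → Prop
  | assign_dead {x e pts pts' l'} : PtrTy (.assign x e) pts pts' → x ∉ l' →
      DceTy (.assign x e) (pts, l') (pts', l') .skip
  | assign_live {x e pts pts' l'} : PtrTy (.assign x e) pts pts' → x ∈ l' →
      DceTy (.assign x e) (pts, (l' \ {x}) ∪ FV e) (pts', l') (.assign x e)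
  | addrOf_dead {x y pts l'} : x ∉ l' →
      DceTy (.addrOf x y) (pts, l') (Function.update pts x {y}, l') .skip
  | addrOf_live {x y pts l'} : x ∈ l' →
      DceTy (.addrOf x y) (pts, l' \ {x}) (Function.update pts x {y}, l')
        (.addrOf x y)
  | load_dead {x y pts pts' l'} : PtrTy (.load x y) pts pts' → x ∉ l' →
      DceTy (.load x y) (pts, l' ∪ {y}) (pts', l') .skip
  | load_live {x y pts pts' l'} : PtrTy (.load x y) pts pts' → x ∈ l' →
      DceTy (.load x y) (pts, (l' \ {x}) ∪ {y} ∪ pts y) (pts', l') (.load x y)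
  | store_dead {x e pts pts' l'} : PtrTy (.store x e) pts pts' →
      pts x ∩ l' = ∅ → DceTy (.store x e) (pts, l' ∪ {x}) (pts', l') .skip
  | store_live {x e pts pts' l'} : PtrTy (.store x e) pts pts' →
      pts x ∩ l' ≠ ∅ →
      DceTy (.store x e) (pts, l' ∪ FV e ∪ {x}) (pts', l') (.store x e)
  | skip {pts l} : DceTy .skip (pts, l) (pts, l) .skip
  | seq {S₁ S₂ S₁' S₂' pts l pts'' l'' pts' l'} :
      DceTy S₁ (pts, l) (pts'', l'') S₁' → DceTy S₂ (pts'', l'') (pts', l') S₂' →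
      DceTy (.seq S₁ S₂) (pts, l) (pts', l') (.seq S₁' S₂')
  | ite {b Sₜ Sf Sₜ' Sf' pts l pts' l'} : DceTy Sₜ (pts, l) (pts', l') Sₜ' →
      DceTy Sf (pts, l) (pts', l') Sf' →
      DceTy (.ite b Sₜ Sf) (pts, l ∪ FVB b) (pts', l') (.ite b Sₜ' Sf')
  | while {b S S' pts l l'} : l = l' ∪ FVB b → DceTy S (pts, l') (pts, l) S' →
      DceTy (.while b S) (pts, l) (pts, l') (.while b S')
  | par {Ss Ss' : List Stmt} {pts : PTS} {l' : Set Var}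
      (ptss : Fin Ss.length → PTS) (ls : Fin Ss.length → Set Var)
      (hlen : Ss'.length = Ss.length)
      (h : ∀ i : Fin Ss.length, DceTy (Ss.get i)
        (pts ⊔ ⨆ j, ⨆ (_ : j ≠ i), ptss j, ls i)
        (ptss i, l' ∪ ⋃ j, ⋃ (_ : j ≠ i), ls j)
        (Ss'.get (Fin.cast hlen.symm i))) :
      DceTy (.par Ss) (pts, ⋃ i, ls i) (⨆ i, ptss i, l') (.par Ss')
  | parIf {bss bss' : List (Bexp × Stmt)} {pts l pts' l'}
      (hb : bss.map Prod.fst = bss'.map Prod.fst)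
      (h : DceTy (.par (condThreads bss)) (pts, l) (pts', l')
        (.par (condThreads bss'))) :
      DceTy (.parIf bss) (pts, l) (pts', l') (.parIf bss')
  | parFor {S S' pts l pts' l'} : DceTy S (pts ⊔ pts', l) (pts', l' ∪ l) S' →
      DceTy (.parFor S) (pts, l) (pts', l') (.parFor S')
  | csq {S S' t₁ t₂ t₁' t₂'} : LiveLe t₁' t₁ → DceTy S t₁ t₂ S' →
      LiveLe t₂ t₂' → DceTy S t₁' t₂' S'

def singlePointer (x y : Var) : State :=
  Function.update (fun _ => Val.int 0) x (Val.addr y)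

theorem Models.mono {γ : State} {pts pts' : PTS} (h : pts ≤ pts') (hγ : Models γ pts) :
    Models γ pts' :=
  fun x y hxy => h x (hγ x y hxy)

theorem models_singlePointer_iff {x y : Var} {pts : PTS} :
    Models (singlePointer x y) pts ↔ y ∈ pts x := by
  refine ⟨fun h => h x y (Function.update_self ..), fun hy z w hz => ?_⟩
  by_cases hzx : z = x
  · subst hzx
    obtain rfl : y = w := by simpa [singlePointer] using hz
    exact hy
  · simp [singlePointer, hzx] at hz

/-- `pts ≤ pts′` iff every state of type `pts` is of type
`pts′`. -/
theorem ptsLe_iff_models {pts pts' : PTS} :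
    pts ≤ pts' ↔ ∀ γ : State, Models γ pts → Models γ pts' :=
  ⟨fun h _ hγ => hγ.mono h, fun h _ _ hy =>
    models_singlePointer_iff.1 (h _ (models_singlePointer_iff.2 hy))⟩
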